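/- Let V be a finite-dimensional real normed space with ℓ∞-decomposition V = U ⊕ W; i.e., U and W are subspaces with V = U ⊕ W (algebraic direct sum), ‖u + w‖ = max(‖u‖, ‖w‖) for all u ∈ U and w ∈ W, W is the linear span of all ℓ∞-directions of V, and U is the intersection of the subspaces corresponding to the ℓ∞-directions. Then every linear isometry Q : V → V satisfies Q(U) ⊆ U and Q(W) ⊆ W; hence Q factorises over the decomposition as Q_U ⊕ Q_W with each factor a linear isometry. -/

import Mathlib

/-!
A linear isometry of a finite-dimensional space is onto, hence an isometric automorphism, and
an isometric automorphism `Q` carries each ℓ∞-direction `v` with subspace `U` to the ℓ∞-direction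
`Q v` with subspace `Q U`. So `Q` permutes the ℓ∞-directions and their subspaces, and therefore
preserves both their span `W` and the intersection `U` of the subspaces.
-/

/-- `v` is an ℓ∞-direction of `V` with corresponding subspace `U`: `v` is a unit
vector, `V = span{v} ⊕ U` (algebraic direct sum), and
`‖α • v + u‖ = max |α| ‖u‖` for all `α : ℝ` and `u ∈ U`. -/
def IsLinftyDirection {V : Type*} [NormedAddCommGroup V] [NormedSpace ℝ V]
    (v : V) (U : Submodule ℝ V) : Prop :=
  ‖v‖ = 1 ∧ IsCompl (Submodule.span ℝ {v}) U ∧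
    ∀ (α : ℝ), ∀ u ∈ U, ‖α • v + u‖ = max |α| ‖u‖

namespace LinearIsometry

variable {R E : Type*} [Ring R] [SeminormedAddCommGroup E] [Module R E]

def restrict (f : E →ₗᵢ[R] E) {p : Submodule R E} (hp : ∀ x ∈ p, f x ∈ p) :
    p →ₗᵢ[R] p :=
  ⟨f.toLinearMap.restrict hp, fun x => f.norm_map x⟩

@[simp]
theorem coe_restrict_apply (f : E →ₗᵢ[R] E) {p : Submodule R E} (hp : ∀ x ∈ p, f x ∈ p)
    (x : p) : (f.restrict hp x : E) = f x :=
  rfl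

end LinearIsometry

section LinftyDirection

variable {V V' : Type*} [NormedAddCommGroup V] [NormedSpace ℝ V]
  [NormedAddCommGroup V'] [NormedSpace ℝ V']

theorem IsLinftyDirection.map (e : V ≃ₗᵢ[ℝ] V') {v : V} {U : Submodule ℝ V}
    (h : IsLinftyDirection v U) :
    IsLinftyDirection (e v) (U.map (e.toLinearEquiv : V →ₗ[ℝ] V')) := by
  obtain ⟨hnorm, hcompl, hmax⟩ := h
  refine ⟨by rw [e.norm_map, hnorm], ?_, ?_⟩
  · have := (Submodule.orderIsoMapComap e.toLinearEquiv).isCompl hcompl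
    rwa [Submodule.orderIsoMapComap_apply, Submodule.map_span, Set.image_singleton] at this
  · rintro α _ ⟨u, hu, rfl⟩
    have hcoe : (e.toLinearEquiv : V →ₗ[ℝ] V') u = e u := rfl
    rw [hcoe, e.norm_map, ← hmax α u hu, ← e.norm_map (α • v + u), map_add, map_smul]

theorem apply_mem_span_linftyDirections (e : V ≃ₗᵢ[ℝ] V') {w : V}
    (hw : w ∈ Submodule.span ℝ {x : V | ∃ U : Submodule ℝ V, IsLinftyDirection x U}) :
    e w ∈ Submodule.span ℝ {x : V' | ∃ U : Submodule ℝ V', IsLinftyDirection x U} := by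
  have hle : (Submodule.span ℝ {x : V | ∃ U : Submodule ℝ V, IsLinftyDirection x U}).map
      (e.toLinearEquiv : V →ₗ[ℝ] V') ≤
      Submodule.span ℝ {x : V' | ∃ U : Submodule ℝ V', IsLinftyDirection x U} := by
    rw [Submodule.map_span, Submodule.span_le]
    rintro _ ⟨x, ⟨U, hx⟩, rfl⟩
    exact Submodule.subset_span ⟨_, hx.map e⟩
  exact hle ⟨w, hw, rfl⟩

theorem apply_mem_sInf_linftyComplements (e : V ≃ₗᵢ[ℝ] V') {u : V}
    (hu : u ∈ sInf {U : Submodule ℝ V | ∃ x : V, IsLinftyDirection x U}) :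
    e u ∈ sInf {U : Submodule ℝ V' | ∃ x : V', IsLinftyDirection x U} := by
  rw [Submodule.mem_sInf] at hu ⊢
  rintro U ⟨x, hx⟩
  obtain ⟨u', hu', hu'_eq⟩ := hu _ ⟨_, hx.map e.symm⟩
  rw [← hu'_eq]
  simpa using hu'

end LinftyDirection

theorem linearIsometry_factorises_general
    {V : Type*} [NormedAddCommGroup V] [NormedSpace ℝ V] [FiniteDimensional ℝ V]
    (U W : Submodule ℝ V)
    (hW : W = Submodule.span ℝ {x : V | ∃ U' : Submodule ℝ V, IsLinftyDirection x U'})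
    (hU : U = sInf {U' : Submodule ℝ V | ∃ x : V, IsLinftyDirection x U'})
    (Q : V →ₗᵢ[ℝ] V) :
    (∀ u ∈ U, Q u ∈ U) ∧ (∀ w ∈ W, Q w ∈ W) ∧
    ∃ (QU : U →ₗᵢ[ℝ] U) (QW : W →ₗᵢ[ℝ] W),
      ∀ (u : U) (w : W), Q ((u : V) + (w : V)) = (QU u : V) + (QW w : V) := by
  subst hU hW
  let e : V ≃ₗᵢ[ℝ] V := Q.toLinearIsometryEquiv rfl
  have hQU : ∀ u ∈ _, Q u ∈ _ := fun u hu => apply_mem_sInf_linftyComplements e hu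
  have hQW : ∀ w ∈ _, Q w ∈ _ := fun w hw => apply_mem_span_linftyDirections e hw
  exact ⟨hQU, hQW, Q.restrict hQU, Q.restrict hQW, fun u w => by simp⟩

/-- Let `V = U ⊕ W` be the ℓ∞-decomposition of a
finite-dimensional real normed space.  Then every linear isometry `Q : V → V` maps
`U` into `U` and `W` into `W`; hence it factorises over the decomposition as
`Q = Q_U ⊕ Q_W` with each factor a linear isometry. -/
theorem linearIsometry_factorises
    {V : Type*} [NormedAddCommGroup V] [NormedSpace ℝ V] [FiniteDimensional ℝ V]
    (U W : Submodule ℝ V)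
    (hcompl : IsCompl U W)
    (hmax : ∀ u ∈ U, ∀ w ∈ W, ‖u + w‖ = max ‖u‖ ‖w‖)
    (hW : W = Submodule.span ℝ {x : V | ∃ U' : Submodule ℝ V, IsLinftyDirection x U'})
    (hU : U = sInf {U' : Submodule ℝ V | ∃ x : V, IsLinftyDirection x U'})
    (Q : V →ₗᵢ[ℝ] V) :
    (∀ u ∈ U, Q u ∈ U) ∧ (∀ w ∈ W, Q w ∈ W) ∧
    ∃ (QU : U →ₗᵢ[ℝ] U) (QW : W →ₗᵢ[ℝ] W),
      ∀ (u : U) (w : W), Q ((u : V) + (w : V)) = (QU u : V) + (QW w : V) :=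
  linearIsometry_factorises_general U W hW hU Q
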